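/- If G is a graph with a clique cut-set K (i.e., V(G) = A ∪ K ∪ B where K is a clique, A and B are nonempty, and there are no edges between A and B), then G is perfect if and only if both induced subgraphs G[A ∪ K] and G[B ∪ K] are perfect. -/

import Mathlib

open scoped Classical

namespace PlanePerfect

variable {V : Type*}

/-- A straight-line plane embedding of a simple graph. -/
structure PlaneEmbedding (G : SimpleGraph V) where
  pos : V → ℝ × ℝ
  inj : Function.Injective pos
  edges_disjoint : ∀ ⦃u v x y : V⦄, G.Adj u v → G.Adj x y →
    ∀ p : ℝ × ℝ, p ∈ openSegment ℝ (pos u) (pos v) →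
      p ∈ openSegment ℝ (pos x) (pos y) → s(u, v) = s(x, y)
  vertex_not_on_edge : ∀ ⦃u v w : V⦄, G.Adj u v →
    pos w ∉ openSegment ℝ (pos u) (pos v)

/-- The drawing (point set) of the induced subgraph on `W`. -/
def drawing {G : SimpleGraph V} (E : PlaneEmbedding G) (W : Set V) : Set (ℝ × ℝ) :=
  (E.pos '' W) ∪ ⋃ (u ∈ W), ⋃ (v ∈ W), ⋃ (_ : G.Adj u v), segment ℝ (E.pos u) (E.pos v)

/-- The exterior (unbounded) region of the drawing of `G[W]`. -/
def outerRegion {G : SimpleGraph V} (E : PlaneEmbedding G) (W : Set V) : Set (ℝ × ℝ) :=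
  {p | p ∉ drawing E W ∧
    ¬ Bornology.IsBounded (connectedComponentIn (drawing E W)ᶜ p)}

/-- Vertices of `W` on the boundary of the exterior face of `G[W]`. -/
def extBoundary {G : SimpleGraph V} (E : PlaneEmbedding G) (W : Set V) : Set V :=
  {v ∈ W | E.pos v ∈ closure (outerRegion E W)}

/-- Vertices drawn in the interior (bounded) region of the drawing of `G[W]`. -/
def intVerts {G : SimpleGraph V} (E : PlaneEmbedding G) (W : Set V) : Set V :=
  {v | v ∉ W ∧ E.pos v ∉ drawing E W ∧
    Bornology.IsBounded (connectedComponentIn (drawing E W)ᶜ (E.pos v))}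

/-- Vertices drawn in the exterior (unbounded) region of the drawing of `G[W]`. -/
def extVerts {G : SimpleGraph V} (E : PlaneEmbedding G) (W : Set V) : Set V :=
  {v | v ∉ W ∧ E.pos v ∉ drawing E W ∧
    ¬ Bornology.IsBounded (connectedComponentIn (drawing E W)ᶜ (E.pos v))}

/-- The plane graph `G[W]` is a near-triangulation: every bounded face is a triangle. -/
def NearTriOn {G : SimpleGraph V} (E : PlaneEmbedding G) (W : Set V) : Prop :=
  ∀ p : ℝ × ℝ, p ∉ drawing E W →
    Bornology.IsBounded (connectedComponentIn (drawing E W)ᶜ p) →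
    ∃ x y z, x ∈ W ∧ y ∈ W ∧ z ∈ W ∧ G.Adj x y ∧ G.Adj y z ∧ G.Adj x z ∧
      frontier (connectedComponentIn (drawing E W)ᶜ p) = drawing E {x, y, z}

/-- `xyz` is a facial triangle of the plane graph `G`. -/
def IsFacialTriangle {G : SimpleGraph V} (E : PlaneEmbedding G) (x y z : V) : Prop :=
  G.Adj x y ∧ G.Adj y z ∧ G.Adj x z ∧
  ∃ p, p ∉ drawing E Set.univ ∧
    frontier (connectedComponentIn (drawing E Set.univ)ᶜ p) = drawing E {x, y, z}

/-- `xyz` is a separating triangle of the plane graph `G[W]`. -/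
def SepTriOn {G : SimpleGraph V} (E : PlaneEmbedding G) (W : Set V) (x y z : V) : Prop :=
  x ∈ W ∧ y ∈ W ∧ z ∈ W ∧ G.Adj x y ∧ G.Adj y z ∧ G.Adj x z ∧
  (intVerts E {x, y, z} ∩ W).Nonempty ∧ (extVerts E {x, y, z} ∩ W).Nonempty

/-- `uv` is an edge separator of `G[W]`. -/
def EdgeSepOn (G : SimpleGraph V) (W : Set V) (u v : V) : Prop :=
  u ∈ W ∧ v ∈ W ∧ G.Adj u v ∧ ¬ (G.induce (W \ {u, v})).Connected

/-- `G[W]` is `2`-connected. -/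
def TwoConnOn (G : SimpleGraph V) (W : Set V) : Prop :=
  3 ≤ W.ncard ∧ (G.induce W).Connected ∧ ∀ v ∈ W, (G.induce (W \ {v})).Connected

/-- `G[W]` is a W-triangulation: a `2`-connected plane near-triangulation with
no edge separator and no separating triangle. -/
def WTriOn {G : SimpleGraph V} (E : PlaneEmbedding G) (W : Set V) : Prop :=
  TwoConnOn G W ∧ NearTriOn E W ∧ (∀ u v, ¬ EdgeSepOn G W u v) ∧
    ∀ x y z, ¬ SepTriOn E W x y z

/-- A W-component: a maximal vertex set inducing a W-triangulation. -/
def IsWComponent {G : SimpleGraph V} (E : PlaneEmbedding G) (W : Set V) : Prop :=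
  WTriOn E W ∧ ∀ W', W ⊆ W' → WTriOn E W' → W' = W

/-- Vertex set of a closed walk. -/
def supportSet {G : SimpleGraph V} {u : V} (w : G.Walk u u) : Set V := {x | x ∈ w.support}

/-- `C` is an odd hole of `G`: the vertex set of an induced cycle of odd length `≥ 5`. -/
def IsOddHole (G : SimpleGraph V) (C : Set V) : Prop :=
  ∃ (v : V) (w : G.Walk v v), w.IsCycle ∧ Odd w.length ∧ 5 ≤ w.length ∧
    (∀ x y, x ∈ w.support → y ∈ w.support → G.Adj x y → w.toSubgraph.Adj x y) ∧
    C = supportSet w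

/-- `C` is a minimal odd hole: no other odd hole lies within `C ∪ Int(C)`. -/
def MinimalOddHole {G : SimpleGraph V} (E : PlaneEmbedding G) (C : Set V) : Prop :=
  IsOddHole G C ∧ ∀ C', IsOddHole G C' → C' ⊆ C ∪ intVerts E C → C' = C

/-- A graph is perfect if every induced subgraph has chromatic number equal to
its clique number. -/
def IsPerfect (G : SimpleGraph V) : Prop :=
  ∀ S : Set V, (G.induce S).chromaticNumber = ((G.induce S).cliqueNum : ℕ∞)

/-- Closed neighbourhood of a set of vertices. -/
def closedNbhd (G : SimpleGraph V) (X : Set V) : Set V :=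
  X ∪ {v | ∃ x ∈ X, G.Adj x v}

/-- Degree of a vertex, as the cardinality of its neighbour set. -/
noncomputable def deg (G : SimpleGraph V) (v : V) : ℕ := (G.neighborSet v).ncard

/-- `G` is an even W-triangulation (w.r.t. the embedding `E`): every internal
vertex has even degree. -/
def EvenWTri {G : SimpleGraph V} (E : PlaneEmbedding G) : Prop :=
  WTriOn E Set.univ ∧ ∀ v, v ∉ extBoundary E Set.univ → Even (deg G v)


/-- The auxiliary graph `G'` on `S ∪ T`: edges of the odd hole `C` (= all `G`-edges
within `S`, since `C` is induced), edges of the boundary cycle `C'` (the cycle `w'`),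
and all `G`-edges between `S` and `T`. -/
def auxGraph (G : SimpleGraph V) (S T : Set V) {b₀ : V} (w' : G.Walk b₀ b₀) :
    SimpleGraph V :=
  SimpleGraph.fromRel (fun u v =>
    (u ∈ S ∧ v ∈ S ∧ G.Adj u v) ∨ w'.toSubgraph.Adj u v ∨ (u ∈ S ∧ v ∈ T ∧ G.Adj u v))

end PlanePerfect

open PlanePerfect

/-!
Perfection passes to induced subgraphs, which gives one direction. For the other, fix `S`;
the two sides `G[S ∩ (A ∪ K)]` and `G[S ∩ (B ∪ K)]` are induced subgraphs of perfect graphs, so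
each can be coloured with at most `ω(G[S])` colours. Both colourings are injective on the clique
`S ∩ K`, so after permuting the colours of one side they agree there, and since no edge joins
`A` to `B` their union is a proper colouring of `G[S]`.
-/

namespace SimpleGraph

variable {V W : Type*} {G : SimpleGraph V} {H : SimpleGraph W}

theorem Embedding.cliqueNum_le [Finite W] (f : G ↪g H) : G.cliqueNum ≤ H.cliqueNum := by
  obtain ⟨s, hs⟩ := G.exists_isNClique_cliqueNum
  have hclique : H.IsClique (s.map f.toEmbedding) := by
    intro a ha b hb hab
    simp only [Finset.coe_map, Set.mem_image, Finset.mem_coe] at ha hb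
    obtain ⟨x, hx, rfl⟩ := ha
    obtain ⟨y, hy, rfl⟩ := hb
    exact f.map_adj_iff.mpr (hs.isClique hx hy (ne_of_apply_ne _ hab))
  simpa [hs.card_eq] using hclique.card_le_cliqueNum

noncomputable def Embedding.induceImageIso (f : G ↪g H) (s : Set V) :
    G.induce s ≃g H.induce (f '' s) where
  toEquiv := Equiv.Set.image f s f.injective
  map_rel_iff' := by simp

def induceInduceEmbedding (G : SimpleGraph V) (s t : Set V) :
    (G.induce s).induce (Subtype.val ⁻¹' t) ↪g G.induce t where
  toFun v := ⟨v.1.1, v.2⟩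
  inj' v w h := by simpa [Subtype.ext_iff] using h
  map_rel_iff' := Iff.rfl

theorem nonempty_coloring_of_induce_cover {α : Type*} {X Y : Set V} (hXY : X ∪ Y = Set.univ)
    (hedge : ∀ ⦃u v⦄, G.Adj u v → (u ∈ X ∧ v ∈ X) ∨ (u ∈ Y ∧ v ∈ Y))
    (c₁ : (G.induce X).Coloring α) (c₂ : (G.induce Y).Coloring α)
    (hagree : ∀ v (hX : v ∈ X) (hY : v ∈ Y), c₁ ⟨v, hX⟩ = c₂ ⟨v, hY⟩) :
    Nonempty (G.Coloring α) := by
  classical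
  have hY : ∀ v, v ∉ X → v ∈ Y := fun v hv => (hXY ▸ Set.mem_univ v : v ∈ X ∪ Y).resolve_left hv
  let f : V → α := fun v => if h : v ∈ X then c₁ ⟨v, h⟩ else c₂ ⟨v, hY v h⟩
  have hf₁ : ∀ v (h : v ∈ X), f v = c₁ ⟨v, h⟩ := fun v h => dif_pos h
  have hf₂ : ∀ v (h : v ∈ Y), f v = c₂ ⟨v, h⟩ := fun v h => by
    by_cases hX : v ∈ X
    · exact (dif_pos hX).trans (hagree v hX h)
    · exact dif_neg hX
  refine ⟨Coloring.mk f fun {u v} huv => ?_⟩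
  rcases hedge huv with ⟨hu, hv⟩ | ⟨hu, hv⟩
  · rw [hf₁ u hu, hf₁ v hv]
    exact c₁.valid huv
  · rw [hf₂ u hu, hf₂ v hv]
    exact c₂.valid huv

theorem Colorable.of_isClique_cutset {A K B : Set V} {n : ℕ} (hU : A ∪ K ∪ B = Set.univ)
    (hAB : Disjoint A B) (hK : G.IsClique K) (hsep : ∀ a ∈ A, ∀ b ∈ B, ¬ G.Adj a b)
    (h₁ : (G.induce (A ∪ K)).Colorable n) (h₂ : (G.induce (B ∪ K)).Colorable n) :
    G.Colorable n := by
  obtain ⟨c₁⟩ := h₁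
  obtain ⟨c₂⟩ := h₂
  have hinj : ∀ {X : Set V} (c : (G.induce (X ∪ K)).Coloring (Fin n)),
      Function.Injective fun k : K => c ⟨k, Or.inr k.2⟩ := fun c =>
    c.injective_comp_of_pairwise_adj _ fun k k' hne => hK k.2 k'.2 (Subtype.coe_injective.ne hne)
  have : Finite K := Finite.of_injective _ (hinj c₁)
  obtain ⟨σ, hσ⟩ := Equiv.Perm.exists_extending_pair _ _ (hinj c₂) (hinj c₁)
  have hmem : ∀ v, v ∈ A ∨ v ∈ K ∨ v ∈ B := fun v => by
    have := hU ▸ Set.mem_univ v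
    simp only [Set.mem_union] at this
    tauto
  refine nonempty_coloring_of_induce_cover (X := A ∪ K) (Y := B ∪ K) ?_ ?_ c₁
    (G.induce (B ∪ K) |>.recolorOfEquiv σ c₂) ?_
  · rw [← hU]
    ext v
    simp only [Set.mem_union]
    tauto
  · intro u v huv
    simp only [Set.mem_union]
    grind [G.adj_symm huv, hmem u, hmem v, hsep u, hsep v]
  · intro v hX hY
    have hvK : v ∈ K := hX.elim (fun hA => hY.resolve_left (Set.disjoint_left.mp hAB hA)) id
    exact (hσ ⟨v, hvK⟩).symm

end SimpleGraph

open SimpleGraph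

namespace PlanePerfect

variable {V W : Type*} {G : SimpleGraph V} {H : SimpleGraph W}

theorem isPerfect_iff_colorable :
    IsPerfect G ↔ ∀ S : Set V, (G.induce S).Colorable (G.induce S).cliqueNum :=
  forall_congr' fun S => by
    rw [← chromaticNumber_le_iff_colorable]
    exact ⟨le_of_eq, fun h => h.antisymm cliqueNum_le_chromaticNumber⟩

variable [Finite V]

theorem IsPerfect.colorable_cliqueNum (h : IsPerfect G) : G.Colorable G.cliqueNum :=
  ((isPerfect_iff_colorable.mp h Set.univ).of_hom (induceUnivIso G).symm.toHom).mono
    (induceUnivIso G).toEmbedding.cliqueNum_le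

theorem IsPerfect.of_embedding (f : G ↪g H) (h : IsPerfect H) : IsPerfect G :=
  isPerfect_iff_colorable.mpr fun S =>
    ((isPerfect_iff_colorable.mp h (f '' S)).of_hom (f.induceImageIso S).toHom).mono
      (f.induceImageIso S).symm.toEmbedding.cliqueNum_le

theorem IsPerfect.induce (h : IsPerfect G) (S : Set V) : IsPerfect (G.induce S) :=
  h.of_embedding (Embedding.induce S)

end PlanePerfect

theorem clique_cutset_perfect_general {V : Type*} [Fintype V] (G : SimpleGraph V)
    (A K B : Set V) (hU : A ∪ K ∪ B = Set.univ)
    (hAB : Disjoint A B)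
    (hK : G.IsClique K)
    (hsep : ∀ a ∈ A, ∀ b ∈ B, ¬ G.Adj a b) :
    IsPerfect G ↔ IsPerfect (G.induce (A ∪ K)) ∧ IsPerfect (G.induce (B ∪ K)) := by
  refine ⟨fun h => ⟨h.induce _, h.induce _⟩, fun ⟨hPA, hPB⟩ => ?_⟩
  refine isPerfect_iff_colorable.mpr fun S => ?_
  have side : ∀ X, IsPerfect (G.induce X) →
      ((G.induce S).induce (Subtype.val ⁻¹' X)).Colorable (G.induce S).cliqueNum := fun X hX =>
    (hX.of_embedding (G.induceInduceEmbedding S X)).colorable_cliqueNum.mono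
      (Embedding.induce _).cliqueNum_le
  exact Colorable.of_isClique_cutset (A := Subtype.val ⁻¹' A) (K := Subtype.val ⁻¹' K)
    (B := Subtype.val ⁻¹' B) (by simp [← Set.preimage_union, hU]) (hAB.preimage _)
    (fun a ha b hb hab => hK ha hb (Subtype.coe_injective.ne hab))
    (fun a ha b hb => hsep _ ha _ hb) (side _ hPA) (side _ hPB)

/-- Clique cut-set decomposition preserves perfectness. -/
theorem clique_cutset_perfect {V : Type*} [Fintype V] (G : SimpleGraph V)
    (A K B : Set V) (hU : A ∪ K ∪ B = Set.univ)
    (hAK : Disjoint A K) (hBK : Disjoint B K) (hAB : Disjoint A B)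
    (hK : G.IsClique K) (hA : A.Nonempty) (hB : B.Nonempty)
    (hsep : ∀ a ∈ A, ∀ b ∈ B, ¬ G.Adj a b) :
    IsPerfect G ↔ IsPerfect (G.induce (A ∪ K)) ∧ IsPerfect (G.induce (B ∪ K)) :=
  clique_cutset_perfect_general G A K B hU hAB hK hsep
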